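/- arXiv:2208.09018 — 3 statements merged into one kernel-verified Lean document; each statement's English description precedes it below -/
import Mathlib

section
/- If a : [0,∞) → ℝ is measurable, essentially bounded, and there exist a₀ > 0 and t₀ ≥ 0 such that liminf over pairs t ≥ s ≥ t₀ with t - s ≥ a₀ of (1/(t-s)) ∫_s^t a(τ) dτ is strictly positive, then there exist M > 0 and λ > 0 such that for all t ≥ s ≥ t₀, exp(-∫_s^t a(ξ) dξ) ≤ M · exp(-λ(t-s)). -/
open Real MeasureTheory Set

theorem stmt_0 (a : ℝ → ℝ) (t₀ a₀ c : ℝ)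
    (ha : Measurable a) (hb : ∃ C : ℝ, ∀ᵐ t ∂(volume : Measure ℝ), |a t| ≤ C)
    (ht₀ : 0 ≤ t₀) (ha₀ : 0 < a₀) (hc : 0 < c)
    (hliminf : ∀ s t : ℝ, t₀ ≤ s → s ≤ t → a₀ ≤ t - s →
      c ≤ (1 / (t - s)) * ∫ τ in s..t, a τ) :
    ∃ M > 0, ∃ lam > 0, ∀ s t : ℝ, t₀ ≤ s → s ≤ t →
      Real.exp (-∫ ξ in s..t, a ξ) ≤ M * Real.exp (-lam * (t - s)) := by
  obtain ⟨C, hC⟩ := hb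
  set C' : ℝ := max C 0 + 1 with hC'def
  have hC'pos : 0 < C' := by positivity
  have hbound : ∀ᵐ t ∂(volume : Measure ℝ), |a t| ≤ C' := by
    filter_upwards [hC] with t ht
    calc |a t| ≤ C := ht
    _ ≤ max C 0 + 1 := by
        have := le_max_left C 0; linarith
  refine ⟨Real.exp ((C' + c) * a₀), Real.exp_pos _, c, hc, ?_⟩
  intro s t hs hst
  have hint : IntervalIntegrable a volume s t := by
    constructor <;>
    · refine Integrable.mono' (integrable_const C') ha.aestronglyMeasurable.restrict ?_
      exact ae_restrict_of_ae hbound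
  have hlow : -C' * (t - s) ≤ ∫ ξ in s..t, a ξ := by
    have hcint : IntervalIntegrable (fun _ : ℝ => -C') volume s t := intervalIntegrable_const
    have hle : (fun _ : ℝ => -C') ≤ᵐ[volume] a := by
      filter_upwards [hbound] with x hx
      have := abs_le.mp hx
      simpa using this.1
    have h2 := intervalIntegral.integral_mono_ae hst hcint hint hle
    rw [intervalIntegral.integral_const, smul_eq_mul] at h2
    nlinarith [h2]
  have hM1 : (1 : ℝ) ≤ Real.exp ((C' + c) * a₀) := by
    have : 0 ≤ (C' + c) * a₀ := by positivity
    simpa using Real.exp_le_exp.mpr this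
  rcases le_or_gt a₀ (t - s) with h | h
  · -- long interval: use hliminf
    have hcle := hliminf s t hs hst h
    have hts : 0 < t - s := lt_of_lt_of_le ha₀ h
    have hIl : c * (t - s) ≤ ∫ ξ in s..t, a ξ := by
      have := mul_le_mul_of_nonneg_right hcle (le_of_lt hts)
      rw [one_div, mul_comm (t-s)⁻¹, mul_assoc, inv_mul_cancel₀ (ne_of_gt hts), mul_one] at this
      linarith [this]
    calc Real.exp (-∫ ξ in s..t, a ξ) ≤ Real.exp (-c * (t - s)) := by
          apply Real.exp_le_exp.mpr; linarith
    _ ≤ Real.exp ((C' + c) * a₀) * Real.exp (-c * (t - s)) := by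
          nlinarith [Real.exp_pos (-c * (t - s))]
  · -- short interval
    have hts : 0 ≤ t - s := by linarith
    have h1 : -∫ ξ in s..t, a ξ ≤ C' * (t - s) := by linarith
    calc Real.exp (-∫ ξ in s..t, a ξ) ≤ Real.exp (C' * (t - s)) := Real.exp_le_exp.mpr h1
    _ ≤ Real.exp ((C' + c) * a₀ + -c * (t - s)) := by
        apply Real.exp_le_exp.mpr
        nlinarith
    _ = Real.exp ((C' + c) * a₀) * Real.exp (-c * (t - s)) := Real.exp_add _ _
end

section
/- If a : [0,∞) → ℝ is measurable, essentially bounded, and there exist a₀ > 0, h > 0, t₀ ≥ 0 such that ∫_t^{t+h} a(s) ds ≥ a₀ for all t ≥ t₀, then there exist M > 0 and λ > 0 such that exp(-∫_s^t a(ξ) dξ) ≤ M e^{-λ(t-s)} for all t ≥ s ≥ t₀. -/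
/-!
Split `[s, t]` into `n = ⌊(t - s) / h⌋` windows of length `h` and a remainder of length `< h`.
Each window contributes at least `a₀` and the remainder at least `-C h`, where `C` bounds `|a|`,
so `∫_s^t a ≥ (a₀ / h) (t - s) - (a₀ + C h)`; exponentiating gives the claim with
`λ = a₀ / h` and `M = exp (a₀ + C h)`.
-/

open Real MeasureTheory Set

theorem intervalIntegrable_of_ae_abs_le {f : ℝ → ℝ} (hf : AEStronglyMeasurable f volume) {C : ℝ}
    (hC : ∀ᵐ t ∂(volume : Measure ℝ), |f t| ≤ C) (u v : ℝ) :
    IntervalIntegrable f volume u v :=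
  intervalIntegrable_const.mono_fun' hf.restrict (ae_restrict_of_ae hC)

theorem neg_mul_sub_le_integral_of_ae_neg_le {f : ℝ → ℝ} {C u v : ℝ} (huv : u ≤ v)
    (hf : IntervalIntegrable f volume u v) (hC : ∀ᵐ t ∂(volume : Measure ℝ), -C ≤ f t) :
    -C * (v - u) ≤ ∫ t in u..v, f t := by
  calc -C * (v - u) = ∫ _ in u..v, -C := by simp [mul_comm]
    _ ≤ ∫ t in u..v, f t := intervalIntegral.integral_mono_ae huv intervalIntegrable_const hf hC

section Windows

variable {f : ℝ → ℝ} {t₀ a₀ h : ℝ}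
  (hf : ∀ u v : ℝ, IntervalIntegrable f volume u v)
  (hwin : ∀ t : ℝ, t₀ ≤ t → a₀ ≤ ∫ s in t..(t + h), f s)
include hf hwin

theorem nat_mul_le_integral_of_window (hh : 0 ≤ h) (n : ℕ) {s : ℝ} (hs : t₀ ≤ s) :
    n * a₀ ≤ ∫ ξ in s..(s + n * h), f ξ := by
  induction n with
  | zero => simp
  | succ n ih =>
    have hnh : 0 ≤ (n : ℝ) * h := by positivity
    have hlast := hwin (s + n * h) (by linarith)
    rw [← intervalIntegral.integral_add_adjacent_intervals (hf s (s + n * h)) (hf _ _)]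
    push_cast
    rw [show s + (n + 1) * h = s + n * h + h by ring]
    linarith

theorem linear_sub_le_integral_of_window (ha₀ : 0 ≤ a₀) (hh : 0 < h) {C : ℝ} (hC₀ : 0 ≤ C)
    (hC : ∀ᵐ t ∂(volume : Measure ℝ), -C ≤ f t) {s t : ℝ} (hs : t₀ ≤ s) (hst : s ≤ t) :
    a₀ / h * (t - s) - (a₀ + C * h) ≤ ∫ ξ in s..t, f ξ := by
  set n : ℕ := ⌊(t - s) / h⌋₊
  have hn_le : (n : ℝ) * h ≤ t - s :=
    (le_div_iff₀ hh).1 (Nat.floor_le (div_nonneg (by linarith) hh.le))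
  have hn_gt : t - s < (n + 1) * h := (div_lt_iff₀ hh).1 (Nat.lt_floor_add_one _)
  have hwindows := nat_mul_le_integral_of_window hf hwin hh.le n hs
  have hrem := neg_mul_sub_le_integral_of_ae_neg_le (by linarith) (hf (s + n * h) t) hC
  have hrem_h : -C * h ≤ -C * (t - (s + n * h)) :=
    mul_le_mul_of_nonpos_left (by linarith) (neg_nonpos.2 hC₀)
  have hfloor : a₀ / h * (t - s) - a₀ ≤ n * a₀ := by
    rw [div_mul_eq_mul_div, div_sub' hh.ne', div_le_iff₀ hh]
    linarith [mul_le_mul_of_nonneg_left hn_gt.le ha₀]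
  rw [← intervalIntegral.integral_add_adjacent_intervals (hf s (s + n * h)) (hf _ t)]
  linarith

end Windows

theorem stmt_1_general (a : ℝ → ℝ) (t₀ a₀ h : ℝ)
    (ha : Measurable a) (hb : ∃ C : ℝ, ∀ᵐ t ∂(volume : Measure ℝ), |a t| ≤ C)
    (ha₀ : 0 < a₀) (hh : 0 < h)
    (hwin : ∀ t : ℝ, t₀ ≤ t → a₀ ≤ ∫ s in t..(t + h), a s) :
    ∃ M > 0, ∃ lam > 0, ∀ s t : ℝ, t₀ ≤ s → s ≤ t →
      Real.exp (-∫ ξ in s..t, a ξ) ≤ M * Real.exp (-lam * (t - s)) := by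
  obtain ⟨C, hC⟩ := hb
  obtain ⟨_, hC₀⟩ : ∃ t, 0 ≤ C := (hC.mono fun t ht => (abs_nonneg _).trans ht).exists
  have hint := intervalIntegrable_of_ae_abs_le ha.aestronglyMeasurable hC
  have hlow : ∀ᵐ t ∂(volume : Measure ℝ), -C ≤ a t := hC.mono fun t ht => (abs_le.1 ht).1
  refine ⟨exp (a₀ + C * h), exp_pos _, a₀ / h, div_pos ha₀ hh, fun s t hs hst => ?_⟩
  have hlin := linear_sub_le_integral_of_window hint hwin ha₀.le hh hC₀ hlow hs hst
  rw [← exp_add, exp_le_exp]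
  linarith

theorem stmt_1 (a : ℝ → ℝ) (t₀ a₀ h : ℝ)
    (ha : Measurable a) (hb : ∃ C : ℝ, ∀ᵐ t ∂(volume : Measure ℝ), |a t| ≤ C)
    (ht₀ : 0 ≤ t₀) (ha₀ : 0 < a₀) (hh : 0 < h)
    (hwin : ∀ t : ℝ, t₀ ≤ t → a₀ ≤ ∫ s in t..(t + h), a s) :
    ∃ M > 0, ∃ lam > 0, ∀ s t : ℝ, t₀ ≤ s → s ≤ t →
      Real.exp (-∫ ξ in s..t, a ξ) ≤ M * Real.exp (-lam * (t - s)) :=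
  stmt_1_general a t₀ a₀ h ha hb ha₀ hh hwin
end

section
/- For every ε > 0, with δ = e^ε - 1, the function x defined by x(t) = x(0)·e^{t - n(δ+ε)} for t ∈ [n(δ+ε), n(δ+ε)+ε] and x(t) = x(0)·(e^ε - (t - n(δ+ε) - ε)) for t ∈ [n(δ+ε)+ε, (n+1)(δ+ε)], n = 0,1,2,..., is continuous and periodic in the sense that x((n+1)(δ+ε)) = x(n(δ+ε)) = x(0) for all n; in particular if x(0) ≠ 0 then x(t) does not tend to 0 as t → ∞. -/
open Real MeasureTheory Set Filter

theorem stmt_5 (ε : ℝ) (hε : 0 < ε) (x : ℝ → ℝ)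
    (h1 : ∀ n : ℕ, ∀ t ∈ Icc ((n : ℝ) * (ε + (Real.exp ε - 1)))
        ((n : ℝ) * (ε + (Real.exp ε - 1)) + ε),
        x t = x 0 * Real.exp (t - (n : ℝ) * (ε + (Real.exp ε - 1))))
    (h2 : ∀ n : ℕ, ∀ t ∈ Icc ((n : ℝ) * (ε + (Real.exp ε - 1)) + ε)
        (((n : ℝ) + 1) * (ε + (Real.exp ε - 1))),
        x t = x 0 * (Real.exp ε - (t - (n : ℝ) * (ε + (Real.exp ε - 1)) - ε))) :
    ContinuousOn x (Ici (0 : ℝ)) ∧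
    (∀ n : ℕ, x (((n : ℝ) + 1) * (ε + (Real.exp ε - 1)))
        = x ((n : ℝ) * (ε + (Real.exp ε - 1))) ∧
      x ((n : ℝ) * (ε + (Real.exp ε - 1))) = x 0) ∧
    (x 0 ≠ 0 → ¬ Tendsto x atTop (nhds 0)) := by
  set T : ℝ := ε + (Real.exp ε - 1) with hTdef
  have hδ : ε < Real.exp ε - 1 := by
    have := Real.add_one_lt_exp (ne_of_gt hε); linarith
  have hεT : ε < T := by rw [hTdef]; linarith
  have hT : 0 < T := lt_trans hε hεT
  -- continuity on the two kinds of pieces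
  have hA : ∀ n : ℕ, ContinuousOn x (Icc ((n:ℝ)*T) ((n:ℝ)*T + ε)) := by
    intro n
    exact ContinuousOn.congr (f := fun t => x 0 * Real.exp (t - (n:ℝ)*T))
      (by fun_prop) (fun t ht => h1 n t ht)
  have hB : ∀ n : ℕ, ContinuousOn x (Icc ((n:ℝ)*T + ε) (((n:ℝ)+1)*T)) := by
    intro n
    exact ContinuousOn.congr (f := fun t => x 0 * (Real.exp ε - (t - (n:ℝ)*T - ε)))
      (by fun_prop) (fun t ht => h2 n t ht)
  -- periodicity values
  have hval : ∀ n : ℕ, x (((n:ℝ)+1)*T) = x ((n:ℝ)*T) ∧ x ((n:ℝ)*T) = x 0 := by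
    intro n
    have hv1 : x ((n:ℝ)*T) = x 0 := by
      have := h1 n ((n:ℝ)*T) ⟨le_refl _, by linarith⟩
      simpa using this
    have hv2 : x (((n:ℝ)+1)*T) = x 0 := by
      have hmem : ((n:ℝ)+1)*T ∈ Icc ((n:ℝ)*T + ε) (((n:ℝ)+1)*T) :=
        ⟨by nlinarith, le_refl _⟩
      have := h2 n _ hmem
      have heq : ((n:ℝ)+1)*T - (n:ℝ)*T - ε = Real.exp ε - 1 := by rw [hTdef]; ring
      rw [heq] at this
      rw [this]; ring
    exact ⟨by rw [hv1, hv2], hv1⟩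
  have hcont : ContinuousOn x (Ici 0) := by
    intro t ht
    have ht0 : (0:ℝ) ≤ t := ht
    set n := ⌊t / T⌋₊ with hn
    have hnle : (n:ℝ) * T ≤ t := by
      have h' := Nat.floor_le (div_nonneg ht0 hT.le)
      calc (n:ℝ)*T ≤ (t/T)*T := mul_le_mul_of_nonneg_right h' hT.le
      _ = t := div_mul_cancel₀ t hT.ne'
    have hlt : t < ((n:ℝ)+1) * T := by
      have h' : t / T < (n:ℝ) + 1 := by exact_mod_cast Nat.lt_floor_add_one (t/T)
      calc t = (t/T)*T := (div_mul_cancel₀ t hT.ne').symm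
      _ < ((n:ℝ)+1)*T := mul_lt_mul_of_pos_right h' hT
    rcases lt_trichotomy t ((n:ℝ)*T + ε) with hc | hc | hc
    · rcases eq_or_lt_of_le hnle with he | he
      · -- t = n*T
        rcases Nat.eq_zero_or_pos n with h0 | hpos
        · -- t = 0
          have ht0' : t = 0 := by rw [h0] at he; simpa using he.symm
          subst ht0'
          have hcw : ContinuousWithinAt x (Icc ((0:ℝ)) (0 + ε)) 0 := by
            have := (hA 0).continuousWithinAt (x := (0:ℝ)) (by constructor <;> simp [hε.le])
            simpa using this
          refine hcw.mono_of_mem_nhdsWithin ?_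
          have : Icc ((0:ℝ)) (0+ε) = Ici (0:ℝ) ∩ Iic (0+ε) := (Set.Ici_inter_Iic).symm
          rw [this]
          exact inter_mem self_mem_nhdsWithin
            (mem_nhdsWithin_of_mem_nhds (Iic_mem_nhds (by linarith)))
        · obtain ⟨m, hm⟩ := Nat.exists_eq_succ_of_ne_zero (Nat.pos_iff_ne_zero.mp hpos)
          have hcast : ((m:ℝ)+1) = (n:ℝ) := by rw [hm]; push_cast; ring
          have hmemB : t ∈ Icc ((m:ℝ)*T + ε) (((m:ℝ)+1)*T) := by
            constructor
            · rw [← he, ← hcast]; nlinarith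
            · rw [hcast]; exact he.ge
          have hmemA : t ∈ Icc ((n:ℝ)*T) ((n:ℝ)*T + ε) := ⟨hnle, hc.le⟩
          have hcw := ((hB m).continuousWithinAt hmemB).union
            ((hA n).continuousWithinAt hmemA)
          have hun : Icc ((m:ℝ)*T + ε) (((m:ℝ)+1)*T) ∪ Icc ((n:ℝ)*T) ((n:ℝ)*T + ε)
              = Icc ((m:ℝ)*T + ε) ((n:ℝ)*T + ε) := by
            rw [hcast]
            exact Icc_union_Icc_eq_Icc (by nlinarith) (by linarith)
          rw [hun] at hcw
          refine hcw.mono_of_mem_nhdsWithin (mem_nhdsWithin_of_mem_nhds (Icc_mem_nhds ?_ hc))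
          rw [← he, ← hcast]; nlinarith
      · exact ((hA n).continuousWithinAt ⟨hnle, hc.le⟩).mono_of_mem_nhdsWithin
          (mem_nhdsWithin_of_mem_nhds (Icc_mem_nhds he hc))
    · -- t = n*T + ε
      have hmemA : t ∈ Icc ((n:ℝ)*T) ((n:ℝ)*T + ε) := ⟨hnle, hc.le⟩
      have hmemB : t ∈ Icc ((n:ℝ)*T + ε) (((n:ℝ)+1)*T) := ⟨hc.ge, hlt.le⟩
      have hcw := ((hA n).continuousWithinAt hmemA).union
        ((hB n).continuousWithinAt hmemB)
      have hun : Icc ((n:ℝ)*T) ((n:ℝ)*T + ε) ∪ Icc ((n:ℝ)*T + ε) (((n:ℝ)+1)*T)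
          = Icc ((n:ℝ)*T) (((n:ℝ)+1)*T) :=
        Icc_union_Icc_eq_Icc (by linarith) (by nlinarith)
      rw [hun] at hcw
      refine hcw.mono_of_mem_nhdsWithin (mem_nhdsWithin_of_mem_nhds (Icc_mem_nhds ?_ hlt))
      rw [hc]; linarith
    · exact ((hB n).continuousWithinAt ⟨hc.le, hlt.le⟩).mono_of_mem_nhdsWithin
        (mem_nhdsWithin_of_mem_nhds (Icc_mem_nhds hc hlt))
  refine ⟨hcont, hval, ?_⟩
  intro hx0 htend
  have h3 : Tendsto (fun k : ℕ => (k:ℝ) * T) atTop atTop :=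
    tendsto_natCast_atTop_atTop.atTop_mul_const hT
  have h4 : Tendsto (fun k : ℕ => x ((k:ℝ)*T)) atTop (nhds 0) := htend.comp h3
  have h5 : (fun k : ℕ => x ((k:ℝ)*T)) = fun _ => x 0 :=
    funext fun k => (hval k).2
  rw [h5] at h4
  exact hx0 (tendsto_nhds_unique tendsto_const_nhds h4)
end
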